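/- Let T = k* act on k[x_1, ..., x_n, x_{-n}] with t·x_i = t^i x_i. Then the ideal (x_{-n} − 1) of k[x_1, ..., x_n, x_{-n}] contains no nonzero T-invariant polynomial. -/
import Mathlib

open MvPolynomial

variable (k : Type) [Field k]

/-- The action of `t ∈ k* = 𝔾ₘ` on a polynomial ring in which the variable `x_i` has
weight `w i`: the substitution `x_i ↦ t^{w i} x_i`. -/
noncomputable def torusAct {ι : Type} (w : ι → ℤ) (t : kˣ) :
    MvPolynomial ι k →ₐ[k] MvPolynomial ι k :=
  aeval (fun i => ((t ^ w i : kˣ) : k) • X i)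


lemma eval_torusAct {ι : Type} (w : ι → ℤ) (t : kˣ) (a : ι → k)
    (p : MvPolynomial ι k) :
    eval a (torusAct k w t p) = eval (fun i => ((t ^ w i : kˣ) : k) * a i) p := by
  have h : eval a (torusAct k w t p)
      = (aeval a : MvPolynomial ι k →ₐ[k] k) (torusAct k w t p) := by
    rw [← coe_aeval_eq_eval]; rfl
  have hf : (fun i => (aeval a : MvPolynomial ι k →ₐ[k] k)
      (((t ^ w i : kˣ) : k) • X i)) = fun i => ((t ^ w i : kˣ) : k) * a i := by
    funext i; simp [Algebra.smul_def]
  rw [h, torusAct, comp_aeval_apply, hf, ← coe_aeval_eq_eval]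
  rfl

/-- The ring of invariants of the torus `k*` acting on a polynomial ring with the
variable `x_i` of weight `w i`. -/
noncomputable def torusInv {ι : Type} (w : ι → ℤ) : Subalgebra k (MvPolynomial ι k) where
  carrier := {p | ∀ t : kˣ, torusAct k w t p = p}
  mul_mem' := by intro a b ha hb t; rw [map_mul, ha t, hb t]
  add_mem' := by intro a b ha hb t; rw [map_add, ha t, hb t]
  algebraMap_mem' := by intro r t; exact (torusAct k w t).commutes r

/-- The minimal cardinality of a (finite) generating set of a subalgebra. -/
noncomputable def minGens {R : Type} [CommRing R] [Algebra k R] (A : Subalgebra k R) : ℕ :=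
  sInf {c : ℕ | ∃ S : Finset R, S.card = c ∧ Algebra.adjoin k (S : Set R) = A}

/-- The weight function for the variables `x_1, …, x_n, x_{-n}`: the variable `x_i`
(encoded `some i`) has weight `i + 1 ∈ {1, …, n}`, and `x_{-n}` (encoded `none`) has
weight `-n`. -/
def wOpt (n : ℕ) : Option (Fin n) → ℤ :=
  fun o => Option.elim o (-(n : ℤ)) (fun i => (i : ℤ) + 1)

/-- Let `T = k*` act on `k[x_1, …, x_n, x_{-n}]` with `t · x_i = t^i x_i`.  Then the
ideal `(x_{-n} − 1)` contains no nonzero `T`-invariant polynomial. -/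
theorem no_invariants_in_augmentation_ideal [IsAlgClosed k] (n : ℕ) (hn : 1 ≤ n)
    (p : MvPolynomial (Option (Fin n)) k)
    (hp : p ∈ Ideal.span {(X none - 1 : MvPolynomial (Option (Fin n)) k)})
    (hinv : p ∈ torusInv k (wOpt n)) :
    p = 0 := by
  classical
  obtain ⟨q, hq⟩ := Ideal.mem_span_singleton.mp hp
  have key : ∀ a : Option (Fin n) → k, a none ≠ 0 → eval a p = 0 := by
    intro a ha
    obtain ⟨t, ht⟩ := IsAlgClosed.exists_pow_nat_eq (a none) (show 0 < n by omega)
    have ht0 : t ≠ 0 := by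
      intro h; apply ha; rw [← ht, h, zero_pow (by omega)]
    set u : kˣ := Units.mk0 t ht0 with hu
    have h1 := hinv u
    have h2 : eval a p = eval (fun i => ((u ^ wOpt n i : kˣ) : k) * a i) p := by
      conv_lhs => rw [← h1]
      exact eval_torusAct k (wOpt n) u a p
    set b := fun i => ((u ^ wOpt n i : kˣ) : k) * a i with hb
    have hbnone : b none = 1 := by
      have hval : (u : k) ^ n = a none := by push_cast [hu]; exact ht
      simp only [hb, wOpt, Option.elim, zpow_neg, zpow_natCast]
      rw [Units.val_inv_eq_inv_val]
      push_cast
      rw [hval]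
      exact inv_mul_cancel₀ ha
    rw [h2, hq, map_mul, map_sub, map_one, eval_X, hbnone, sub_self, zero_mul]
  have hzero : p * X none = 0 := by
    apply MvPolynomial.funext
    intro a
    by_cases h : a none = 0
    · simp [h]
    · simp [key a h]
  rcases mul_eq_zero.mp hzero with h | h
  · exact h
  · exact absurd h (X_ne_zero none)
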